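/- Assume hypotheses (EC) and (UC). Let r ∈ (0,r_T). Then the map τ ↦ M(τ,r) from [0,T) to [M(0,r),∞) is strictly monotonically increasing and continuous, with lim_{τ→T⁻} M(τ,r) = ∞. Moreover M = M(τ(M,r),r) for every M ≥ M(0,r), and τ = τ(M(τ,r),r) for every τ ∈ [0,T); consequently the map M ↦ τ(M,r) is the inverse of the map τ ↦ M(τ,r). -/

import Mathlib

open MeasureTheory Set Filter Topology

noncomputable section

variable {H : Type*} [NormedAddCommGroup H] [InnerProductSpace ℂ H] [CompleteSpace H]
  [SecondCountableTopology H]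

/-- `U` is a strongly continuous one-parameter group of unitary operators on `H`,
abstracting the Schrödinger group `e^{-iΔt}`. -/
def IsUnitaryGroup (U : ℝ → H →L[ℂ] H) : Prop :=
  U 0 = ContinuousLinearMap.id ℂ H ∧
  (∀ s t : ℝ, U (s + t) = (U s).comp (U t)) ∧
  (∀ (t : ℝ) (x : H), ‖U t x‖ = ‖x‖) ∧
  ∀ x : H, Continuous fun t : ℝ => U t x

/-- `B` is a nonzero orthogonal projection on `H`, abstracting multiplication by `χ_ω`. -/
def IsOrthProj (B : H →L[ℂ] H) : Prop :=
  B ≠ 0 ∧ B.comp B = B ∧ ∀ x y : H, (inner ℂ (B x) y : ℂ) = inner ℂ x (B y)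

/-- Membership in `L∞((a,b);H)`. -/
def MemLinfty (u : ℝ → H) (a b : ℝ) : Prop :=
  AEStronglyMeasurable u (volume : Measure ℝ) ∧
    ∃ c : ℝ, ∀ᵐ t : ℝ ∂volume, t ∈ Ioo a b → ‖u t‖ ≤ c

/-- Membership in `L∞((0,∞);H)`. -/
def MemLinftyInf (u : ℝ → H) : Prop :=
  AEStronglyMeasurable u (volume : Measure ℝ) ∧
    ∃ c : ℝ, ∀ᵐ t : ℝ ∂volume, t ∈ Ioi (0 : ℝ) → ‖u t‖ ≤ c

/-- The `L∞((a,b);H)` norm of `u`. -/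
def supNorm (u : ℝ → H) (a b : ℝ) : ℝ :=
  sInf {c : ℝ | 0 ≤ c ∧ ∀ᵐ t : ℝ ∂volume, t ∈ Ioo a b → ‖u t‖ ≤ c}

/-- `stateT U B T τ u y₀ = y(T; χ_{(τ,T)}u, y₀)`, the mild solution at time `T` of the
controlled Schrödinger equation with initial state `y₀`, the control acting on `(τ,T)`:
`y(T) = U(T)y₀ + ∫_τ^T U(T-s) B u(s) ds`.  The free state at time `t` starting from `y₀`
with control `u` active from time `0` is `stateT U B t 0 u y₀`. -/
def stateT (U : ℝ → H →L[ℂ] H) (B : H →L[ℂ] H) (T τ : ℝ) (u : ℝ → H) (y₀ : H) : H :=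
  U T y₀ + ∫ s in Ioo τ T, U (T - s) (B (u s))

/-- Hypothesis (EC): `L∞`-exact controllability with cost. -/
def EC (U : ℝ → H →L[ℂ] H) (B : H →L[ℂ] H) : Prop :=
  ∀ τ : ℝ, 0 < τ → ∃ C : ℝ, 0 < C ∧ ∀ y₀ z : H, ∃ u : ℝ → H,
    AEStronglyMeasurable u (volume : Measure ℝ) ∧
    (∀ᵐ t : ℝ ∂volume, t ∈ Ioo 0 τ → ‖u t‖ ≤ C * ‖z - U τ y₀‖) ∧
    stateT U B τ 0 u y₀ = z

/-- Hypothesis (UC): unique continuation. -/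
def UC (U : ℝ → H →L[ℂ] H) (B : H →L[ℂ] H) : Prop :=
  ∀ η : H, η ≠ 0 → volume {t : ℝ | B (U t η) = 0} = 0

/-- The admissible set `U_M` of the minimal time problem `(TOCP)_M`. -/
def UMset (U : ℝ → H →L[ℂ] H) (B : H →L[ℂ] H) (y₀ : H) (M : ℝ) : Set (ℝ → H) :=
  {u | MemLinftyInf u ∧ (∀ᵐ t : ℝ ∂volume, t ∈ Ioi (0 : ℝ) → ‖u t‖ ≤ M) ∧
    ∃ s : ℝ, 0 < s ∧ stateT U B s 0 u y₀ = 0}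

/-- The minimal time `T_M` of `(TOCP)_M`. -/
def Tmin (U : ℝ → H →L[ℂ] H) (B : H →L[ℂ] H) (y₀ : H) (M : ℝ) : ℝ :=
  sInf {s : ℝ | 0 < s ∧ ∃ u ∈ UMset U B y₀ M, stateT U B s 0 u y₀ = 0}

/-- The admissible set `V_T` of the minimal norm problem `(NOCP)_T`. -/
def VTset (U : ℝ → H →L[ℂ] H) (B : H →L[ℂ] H) (y₀ : H) (T : ℝ) : Set (ℝ → H) :=
  {v | MemLinfty v 0 T ∧ stateT U B T 0 v y₀ = 0}

/-- The minimal norm `M_T` of `(NOCP)_T`. -/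
def Mmin (U : ℝ → H →L[ℂ] H) (B : H →L[ℂ] H) (y₀ : H) (T : ℝ) : ℝ :=
  sInf ((fun v : ℝ → H => supNorm v 0 T) '' VTset U B y₀ T)

/-- Hypothesis (BB): bang-bang property of the minimal time problems. -/
def BB (U : ℝ → H →L[ℂ] H) (B : H →L[ℂ] H) : Prop :=
  ∀ y₀ : H, y₀ ≠ 0 → ∀ M : ℝ, 0 < M → ∀ u ∈ UMset U B y₀ M,
    stateT U B (Tmin U B y₀ M) 0 u y₀ = 0 →
    ∀ᵐ t : ℝ ∂volume, t ∈ Ioo 0 (Tmin U B y₀ M) → ‖u t‖ = M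

/-- Hypothesis (ET): existence of optimal controls for the minimal time problems. -/
def ET (U : ℝ → H →L[ℂ] H) (B : H →L[ℂ] H) : Prop :=
  ∀ y₀ : H, y₀ ≠ 0 → ∀ M : ℝ, 0 < M →
    ∃ u ∈ UMset U B y₀ M, stateT U B (Tmin U B y₀ M) 0 u y₀ = 0

/-- The admissible set `U_{M,τ}`. -/
def UadmSet (M τ T : ℝ) : Set (ℝ → H) :=
  {u | MemLinfty u 0 T ∧ ∀ᵐ t : ℝ ∂volume, t ∈ Ioo τ T → ‖u t‖ ≤ M}

/-- The optimal distance `r(M,τ)` of the optimal target problem `(OP)^{M,τ}`. -/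
def rOP (U : ℝ → H →L[ℂ] H) (B : H →L[ℂ] H) (y₀ z_d : H) (T M τ : ℝ) : ℝ :=
  sInf ((fun u : ℝ → H => ‖stateT U B T τ u y₀ - z_d‖) '' UadmSet M τ T)

/-- `u` is an optimal control to `(OP)^{M,τ}`. -/
def IsOptOP (U : ℝ → H →L[ℂ] H) (B : H →L[ℂ] H) (y₀ z_d : H) (T M τ : ℝ) (u : ℝ → H) :
    Prop :=
  u ∈ UadmSet M τ T ∧ ‖stateT U B T τ u y₀ - z_d‖ = rOP U B y₀ z_d T M τ

/-- `M^τ`, the minimal norm for exact steering to the target `z_d`. -/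
def Mtau (U : ℝ → H →L[ℂ] H) (B : H →L[ℂ] H) (y₀ z_d : H) (T τ : ℝ) : ℝ :=
  sInf ((fun u : ℝ → H => supNorm u τ T) ''
    {u : ℝ → H | MemLinfty u 0 T ∧ stateT U B T τ u y₀ = z_d})

/-- The admissible set `W_{τ,r}` of the optimal norm problem `(NP)^{τ,r}`. -/
def WadmSet (U : ℝ → H →L[ℂ] H) (B : H →L[ℂ] H) (y₀ z_d : H) (T τ r : ℝ) :
    Set (ℝ → H) :=
  {u | MemLinfty u 0 T ∧ ‖stateT U B T τ u y₀ - z_d‖ ≤ r}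

/-- The optimal norm `M(τ,r)` of `(NP)^{τ,r}`. -/
def MNP (U : ℝ → H →L[ℂ] H) (B : H →L[ℂ] H) (y₀ z_d : H) (T τ r : ℝ) : ℝ :=
  sInf ((fun u : ℝ → H => supNorm u τ T) '' WadmSet U B y₀ z_d T τ r)

/-- `u` is an optimal control to `(NP)^{τ,r}`. -/
def IsOptNP (U : ℝ → H →L[ℂ] H) (B : H →L[ℂ] H) (y₀ z_d : H) (T τ r : ℝ) (u : ℝ → H) :
    Prop :=
  u ∈ WadmSet U B y₀ z_d T τ r ∧ supNorm u τ T = MNP U B y₀ z_d T τ r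

/-- The admissible set `V_{M,r}` of the second type optimal time problem `(TP)^{M,r}`. -/
def VadmSet (U : ℝ → H →L[ℂ] H) (B : H →L[ℂ] H) (y₀ z_d : H) (T M r : ℝ) :
    Set (ℝ → H) :=
  {u | ∃ τ : ℝ, τ ∈ Ico (0 : ℝ) T ∧ u ∈ UadmSet M τ T ∧
    ‖stateT U B T τ u y₀ - z_d‖ ≤ r}

/-- `τ_{M,r}(u)`. -/
def tauOf (U : ℝ → H →L[ℂ] H) (B : H →L[ℂ] H) (y₀ z_d : H) (T r : ℝ) (u : ℝ → H) : ℝ :=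
  sSup {τ : ℝ | τ ∈ Ico (0 : ℝ) T ∧ ‖stateT U B T τ u y₀ - z_d‖ ≤ r}

/-- The optimal time `τ(M,r)` of `(TP)^{M,r}`. -/
def tauTP (U : ℝ → H →L[ℂ] H) (B : H →L[ℂ] H) (y₀ z_d : H) (T M r : ℝ) : ℝ :=
  sSup (tauOf U B y₀ z_d T r '' VadmSet U B y₀ z_d T M r)

/-- `u` is an optimal control to `(TP)^{M,r}`. -/
def IsOptTP (U : ℝ → H →L[ℂ] H) (B : H →L[ℂ] H) (y₀ z_d : H) (T M r : ℝ) (u : ℝ → H) :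
    Prop :=
  u ∈ VadmSet U B y₀ z_d T M r ∧
    ‖stateT U B T (tauTP U B y₀ z_d T M r) u y₀ - z_d‖ ≤ r

/-- The adjoint state `φ*(t) = U(t-T)(z_d - y(T; χ_{(τ,T)}u, y₀))`. -/
def adjState (U : ℝ → H →L[ℂ] H) (B : H →L[ℂ] H) (y₀ z_d : H) (T τ : ℝ) (u : ℝ → H)
    (t : ℝ) : H :=
  U (t - T) (z_d - stateT U B T τ u y₀)

/-!
Everything rests on a localized form of (EC): every state `ξ` is the Duhamel contribution of a
control supported in a prescribed interval `(a,b)`, of cost `C‖ξ‖`.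

*Strict monotonicity.* Let `τ₁ < τ₂` and let `u` be almost optimal for `(NP)^{τ₂,r}`, with
Duhamel contribution `J`. The control `(1-θ)u` on `(τ₂,T)`, plus a control on `(τ₁,τ₂)`
contributing `θJ`, reaches the same final state from `τ₁`; its norm is at most
`max ((1-θ)‖u‖, CθK)` with `K` a bound for `‖J‖`, which is `< M(τ₂,r)` for small `θ`.

*Continuity.* The contribution of `u` on `(τ₁,τ₂)`, of norm `≤ ‖B‖ M(τ₁,r) (τ₂-τ₁)`, can be
produced by a control on `(T-δ,T)`; so `M(τ₂,r) ≤ M(τ₁,r)(1 + C(τ₂-τ₁))` and `M(·,r)` is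
Lipschitz on `[0,T-δ]`.

*Blow-up.* Reaching `B(z_d,r)` from `τ` needs a contribution of norm `≥ r_T - r`, while
controls of norm `M` contribute at most `‖B‖ (T-τ) M`.

Hence `τ ↦ M(τ,r)` maps `[0,T)` increasingly onto `[M(0,r),∞)`. Finally
`τ(M(τ,r),r) = τ`: a control of norm `≤ M(τ,r)` on `(τ',T)` reaching `B(z_d,r)` forces
`M(τ',r) ≤ M(τ,r)`, i.e. `τ' ≤ τ`, and almost optimal controls for `(NP)^{τ',r}` with
`τ' < τ` are admissible for `(TP)^{M(τ,r),r}`.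
-/

section RealFunction

theorem MonotoneOn.lipschitzOnWith_of_sub_le {f : ℝ → ℝ} {s : Set ℝ} {K : ℝ}
    (hf : MonotoneOn f s) (h : ∀ x ∈ s, ∀ y ∈ s, x ≤ y → f y - f x ≤ K * (y - x)) :
    LipschitzOnWith K.toNNReal f s := by
  refine LipschitzOnWith.of_dist_le' fun x hx y hy => ?_
  rcases le_total x y with hxy | hyx
  · rw [Real.dist_eq, Real.dist_eq, abs_sub_comm, abs_of_nonneg (sub_nonneg.2 (hf hx hy hxy)),
      abs_sub_comm, abs_of_nonneg (sub_nonneg.2 hxy)]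
    exact h x hx y hy hxy
  · rw [Real.dist_eq, Real.dist_eq, abs_of_nonneg (sub_nonneg.2 (hf hy hx hyx)),
      abs_of_nonneg (sub_nonneg.2 hyx)]
    exact h y hy x hx hyx

theorem ContinuousOn.surjOn_Ici_of_tendsto_atTop {f : ℝ → ℝ} {a b : ℝ} (hab : a < b)
    (hf : ContinuousOn f (Ico a b)) (hlim : Tendsto f (𝓝[<] b) atTop) :
    SurjOn f (Ico a b) (Ici (f a)) := by
  intro M hM
  obtain ⟨x, hMx, hx⟩ := ((hlim.eventually (eventually_ge_atTop M)).and
    (Ioo_mem_nhdsLT hab)).exists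
  obtain ⟨y, hy, rfl⟩ := intermediate_value_Icc hx.1.le
    (hf.mono (Icc_subset_Ico_right hx.2)) ⟨hM, hMx⟩
  exact ⟨y, Icc_subset_Ico_right hx.2 hy, rfl⟩

open scoped Pointwise in
theorem Real.le_mul_sInf_image {ι : Type*} {S : Set ι} {g : ι → ℝ} {a k : ℝ} (hS : S.Nonempty)
    (hk : 0 ≤ k) (h : ∀ i ∈ S, a ≤ k * g i) : a ≤ k * sInf (g '' S) := by
  rw [← smul_eq_mul, ← Real.sInf_smul_of_nonneg hk]
  refine le_csInf ((hS.image g).smul_set) ?_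
  rintro _ ⟨_, ⟨i, hi, rfl⟩, rfl⟩
  exact h i hi

end RealFunction

section EssentialBound

variable {E : Type*} [NormedAddCommGroup E] {u w : ℝ → E} {a b c : ℝ}

theorem supNorm_nonneg (u : ℝ → E) (a b : ℝ) : 0 ≤ supNorm u a b :=
  Real.sInf_nonneg fun _ hc => hc.1

theorem supNorm_le (hc : 0 ≤ c) (hb : ∀ᵐ t, t ∈ Ioo a b → ‖u t‖ ≤ c) : supNorm u a b ≤ c :=
  csInf_le ⟨0, fun _ hx => hx.1⟩ ⟨hc, hb⟩

theorem ae_norm_le_supNorm (hb : ∀ᵐ t, t ∈ Ioo a b → ‖u t‖ ≤ c) :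
    ∀ᵐ t, t ∈ Ioo a b → ‖u t‖ ≤ supNorm u a b := by
  have hne : {c : ℝ | 0 ≤ c ∧ ∀ᵐ t, t ∈ Ioo a b → ‖u t‖ ≤ c}.Nonempty :=
    ⟨max c 0, le_max_right _ _, by
      filter_upwards [hb] with t ht hmem using (ht hmem).trans (le_max_left _ _)⟩
  have hseq : ∀ n : ℕ, ∀ᵐ t, t ∈ Ioo a b → ‖u t‖ ≤ supNorm u a b + 1 / (n + 1) := fun n => by
    obtain ⟨c, ⟨-, hc⟩, hlt⟩ := exists_lt_of_csInf_lt hne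
      (lt_add_of_pos_right (supNorm u a b) (Nat.one_div_pos_of_nat (n := n)))
    filter_upwards [hc] with t ht hmem using (ht hmem).trans hlt.le
  filter_upwards [ae_all_iff.2 hseq] with t ht hmem
  have hlim := tendsto_one_div_add_atTop_nhds_zero_nat.const_add (supNorm u a b)
  rw [add_zero] at hlim
  exact ge_of_tendsto' hlim fun n => ht n hmem

theorem MemLinfty.ae_norm_le_supNorm {T τ : ℝ} (hu : MemLinfty u 0 T) (hτ : 0 ≤ τ) :
    ∀ᵐ t, t ∈ Ioo τ T → ‖u t‖ ≤ supNorm u τ T := by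
  obtain ⟨c, hc⟩ := hu.2
  refine _root_.ae_norm_le_supNorm (c := c) ?_
  filter_upwards [hc] with t ht hmem using ht (Ioo_subset_Ioo_left hτ hmem)

theorem memLinfty_of_ae_norm_le (hu : AEStronglyMeasurable u) (hb : ∀ᵐ t, ‖u t‖ ≤ c) :
    MemLinfty u a b :=
  ⟨hu, c, by filter_upwards [hb] with t ht _ using ht⟩

theorem MemLinfty.mono {a' b' : ℝ} (hu : MemLinfty u a b) (ha : a ≤ a') (hb : b' ≤ b) :
    MemLinfty u a' b' := by
  obtain ⟨c, hc⟩ := hu.2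
  exact ⟨hu.1, c, by filter_upwards [hc] with t ht hmem using ht (Ioo_subset_Ioo ha hb hmem)⟩

theorem MemLinfty.add (hu : MemLinfty u a b) (hw : MemLinfty w a b) : MemLinfty (u + w) a b := by
  obtain ⟨c, hc⟩ := hu.2
  obtain ⟨d, hd⟩ := hw.2
  refine ⟨hu.1.add hw.1, c + d, ?_⟩
  filter_upwards [hc, hd] with t htc htd hmem
  exact (norm_add_le _ _).trans (add_le_add (htc hmem) (htd hmem))

theorem MemLinfty.const_smul [NormedSpace ℝ E] (hu : MemLinfty u a b) (k : ℝ) :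
    MemLinfty (k • u) a b := by
  obtain ⟨c, hc⟩ := hu.2
  refine ⟨hu.1.const_smul k, ‖k‖ * c, ?_⟩
  filter_upwards [hc] with t ht hmem
  rw [Pi.smul_apply, norm_smul]
  exact mul_le_mul_of_nonneg_left (ht hmem) (norm_nonneg k)

theorem MemLinfty.indicator (hu : MemLinfty u a b) {A : Set ℝ} (hA : MeasurableSet A) :
    MemLinfty (A.indicator u) a b := by
  obtain ⟨c, hc⟩ := hu.2
  refine ⟨hu.1.indicator hA, c, ?_⟩
  filter_upwards [hc] with t ht hmem using (norm_indicator_le_norm_self u t).trans (ht hmem)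

end EssentialBound

section IntervalIntegral

variable {F : Type*} [NormedAddCommGroup F] [NormedSpace ℝ F] {f : ℝ → F} {a b c : ℝ}

theorem setIntegral_Ioo_eq_intervalIntegral (hab : a ≤ b) :
    ∫ s in Ioo a b, f s = ∫ s in a..b, f s := by
  rw [intervalIntegral.integral_of_le hab, integral_Ioc_eq_integral_Ioo]

theorem setIntegral_Ioo_add_setIntegral_Ioo (hab : a ≤ b) (hbc : b ≤ c)
    (hf : IntegrableOn f (Ioo a c)) :
    (∫ s in Ioo a b, f s) + ∫ s in Ioo b c, f s = ∫ s in Ioo a c, f s := by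
  rw [setIntegral_Ioo_eq_intervalIntegral hab, setIntegral_Ioo_eq_intervalIntegral hbc,
    setIntegral_Ioo_eq_intervalIntegral (hab.trans hbc)]
  exact intervalIntegral.integral_add_adjacent_intervals
    ((intervalIntegrable_iff_integrableOn_Ioo_of_le hab).2 (hf.mono_set (Ioo_subset_Ioo_right hbc)))
    ((intervalIntegrable_iff_integrableOn_Ioo_of_le hbc).2 (hf.mono_set (Ioo_subset_Ioo_left hab)))

theorem setIntegral_Ioo_comp_sub_right (f : ℝ → F) (hab : a ≤ b) (d : ℝ) :
    ∫ s in Ioo a b, f (s - d) = ∫ s in Ioo (a - d) (b - d), f s := by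
  rw [setIntegral_Ioo_eq_intervalIntegral hab,
    setIntegral_Ioo_eq_intervalIntegral (sub_le_sub_right hab d),
    intervalIntegral.integral_comp_sub_right]

end IntervalIntegral

section Duhamel

variable {E : Type*} [NormedAddCommGroup E] [InnerProductSpace ℂ E]
  {U : ℝ → E →L[ℂ] E} {B : E →L[ℂ] E} {u w : ℝ → E} {T τ a b c : ℝ}

theorem IsUnitaryGroup.apply_add (hU : IsUnitaryGroup U) (s t : ℝ) (x : E) :
    U (s + t) x = U s (U t x) := by
  rw [hU.2.1 s t, ContinuousLinearMap.comp_apply]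

theorem IsUnitaryGroup.apply_apply_neg (hU : IsUnitaryGroup U) (t : ℝ) (x : E) :
    U t (U (-t) x) = x := by
  rw [← hU.apply_add, add_neg_cancel, hU.1, ContinuousLinearMap.id_apply]

theorem IsUnitaryGroup.norm_apply (hU : IsUnitaryGroup U) (t : ℝ) (x : E) : ‖U t x‖ = ‖x‖ :=
  hU.2.2.1 t x

theorem IsUnitaryGroup.norm_apply_le (hU : IsUnitaryGroup U) (t : ℝ) (x : E) :
    ‖U t (B x)‖ ≤ ‖B‖ * ‖x‖ := by
  rw [hU.norm_apply]
  exact B.le_opNorm x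

theorem IsUnitaryGroup.aestronglyMeasurable_comp [SecondCountableTopology E]
    (hU : IsUnitaryGroup U) (hu : AEStronglyMeasurable u) (T : ℝ) :
    AEStronglyMeasurable fun s => U (T - s) (B (u s)) := by
  borelize E
  obtain ⟨g, hg, hug⟩ := hu
  have hUm : Measurable (Function.uncurry fun t x => U t x) :=
    measurable_uncurry_of_continuous_of_measurable (fun x => hU.2.2.2 x)
      fun t => (U t).continuous.measurable
  refine ⟨fun s => U (T - s) (B (g s)), ?_, ?_⟩
  · exact (hUm.comp ((measurable_const.sub measurable_id).prodMk
      (B.continuous.measurable.comp hg.measurable))).stronglyMeasurable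
  · filter_upwards [hug] with s hs
    rw [hs]

theorem IsUnitaryGroup.integrableOn_comp [SecondCountableTopology E]
    (hU : IsUnitaryGroup U) (hu : MemLinfty u a b) (T : ℝ) :
    IntegrableOn (fun s => U (T - s) (B (u s))) (Ioo a b) := by
  obtain ⟨c, hc⟩ := hu.2
  refine Integrable.mono' (g := fun _ => ‖B‖ * c) (integrableOn_const measure_Ioo_lt_top.ne)
    (hU.aestronglyMeasurable_comp hu.1 T).restrict ?_
  rw [ae_restrict_iff' measurableSet_Ioo]
  filter_upwards [hc] with t ht hmem
  exact (hU.norm_apply_le _ _).trans (mul_le_mul_of_nonneg_left (ht hmem) (norm_nonneg B))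

theorem IsUnitaryGroup.norm_setIntegral_le (hU : IsUnitaryGroup U) (T : ℝ) (hab : a ≤ b)
    (hb : ∀ᵐ t, t ∈ Ioo a b → ‖u t‖ ≤ c) :
    ‖∫ s in Ioo a b, U (T - s) (B (u s))‖ ≤ ‖B‖ * c * (b - a) := by
  have hle := norm_setIntegral_le_of_norm_le_const_ae (f := fun s => U (T - s) (B (u s)))
    measure_Ioo_lt_top (C := ‖B‖ * c) (by
      rw [ae_restrict_iff' measurableSet_Ioo]
      filter_upwards [hb] with t ht hmem
      exact (hU.norm_apply_le _ _).trans (mul_le_mul_of_nonneg_left (ht hmem) (norm_nonneg B)))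
  rwa [measureReal_def, Real.volume_Ioo, ENNReal.toReal_ofReal (sub_nonneg.2 hab)] at hle

def duhamel (U : ℝ → E →L[ℂ] E) (B : E →L[ℂ] E) (T τ : ℝ) (u : ℝ → E) : E :=
  ∫ s in Ioo τ T, U (T - s) (B (u s))

theorem stateT_eq_add_duhamel (y₀ : E) :
    stateT U B T τ u y₀ = U T y₀ + duhamel U B T τ u :=
  rfl

theorem duhamel_add [SecondCountableTopology E] (hU : IsUnitaryGroup U) (hu : MemLinfty u τ T)
    (hw : MemLinfty w τ T) : duhamel U B T τ (u + w) = duhamel U B T τ u + duhamel U B T τ w := by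
  simp only [duhamel, Pi.add_apply, map_add]
  exact integral_add (hU.integrableOn_comp hu T) (hU.integrableOn_comp hw T)

theorem duhamel_smul (k : ℝ) : duhamel U B T τ (k • u) = k • duhamel U B T τ u := by
  simp only [duhamel, Pi.smul_apply, ContinuousLinearMap.map_smul_of_tower]
  exact integral_smul k _

theorem duhamel_indicator {A : Set ℝ} (hA : MeasurableSet A) (h : A ⊆ Ioo τ T) :
    duhamel U B T τ (A.indicator u) = ∫ s in A, U (T - s) (B (u s)) := by
  have hind : (fun s => U (T - s) (B (A.indicator u s))) =
      A.indicator fun s => U (T - s) (B (u s)) := by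
    ext s
    by_cases hs : s ∈ A <;> simp [hs]
  rw [duhamel, hind, setIntegral_indicator hA, inter_eq_self_of_subset_right h]

theorem duhamel_indicator_Ioo {τ₁ τ₂ : ℝ} (h : τ₁ ≤ τ₂) :
    duhamel U B T τ₁ ((Ioo τ₂ T).indicator u) = duhamel U B T τ₂ u :=
  duhamel_indicator measurableSet_Ioo (Ioo_subset_Ioo_left h)

theorem duhamel_eq_setIntegral_add_duhamel [SecondCountableTopology E] (hU : IsUnitaryGroup U)
    {τ₁ τ₂ : ℝ} (h₁₂ : τ₁ ≤ τ₂) (h₂ : τ₂ ≤ T) (hu : MemLinfty u τ₁ T) :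
    duhamel U B T τ₁ u = (∫ s in Ioo τ₁ τ₂, U (T - s) (B (u s))) + duhamel U B T τ₂ u :=
  (setIntegral_Ioo_add_setIntegral_Ioo h₁₂ h₂ (hU.integrableOn_comp hu T)).symm

theorem EC.exists_control_Ioo [CompleteSpace E] [SecondCountableTopology E]
    (hU : IsUnitaryGroup U) (hEC : EC U B) (T : ℝ) {a b : ℝ} (hab : a < b) (hbT : b ≤ T) :
    ∃ C, 0 ≤ C ∧ ∀ ξ : E, ∃ w : ℝ → E, AEStronglyMeasurable w ∧ (∀ᵐ t, ‖w t‖ ≤ C * ‖ξ‖) ∧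
      (∀ t ∉ Ioo a b, w t = 0) ∧ ∀ τ ≤ a, duhamel U B T τ w = ξ := by
  obtain ⟨C, hC, hctrl⟩ := hEC (b - a) (sub_pos.2 hab)
  refine ⟨C, hC.le, fun ξ => ?_⟩
  -- steer `0` to `U (b - T) ξ` in time `b - a`, then translate the control to `(a, b)`
  obtain ⟨u, hu, hub, hsteer⟩ := hctrl 0 (U (b - T) ξ)
  rw [map_zero, sub_zero, hU.norm_apply] at hub
  rw [stateT_eq_add_duhamel, map_zero, zero_add] at hsteer
  have hshift : Measure.QuasiMeasurePreserving (fun s : ℝ => s - a) :=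
    (measurePreserving_sub_right volume a).quasiMeasurePreserving
  refine ⟨(Ioo a b).indicator fun s => u (s - a),
    (hu.comp_quasiMeasurePreserving hshift).indicator measurableSet_Ioo, ?_,
    fun t ht => indicator_of_notMem ht _, fun τ hτ => ?_⟩
  · filter_upwards [hshift.ae hub] with s hs
    by_cases hmem : s ∈ Ioo a b
    · rw [indicator_of_mem hmem]
      exact hs ⟨sub_pos.2 hmem.1, sub_lt_sub_right hmem.2 a⟩
    · rw [indicator_of_notMem hmem, norm_zero]
      positivity
  have hint : IntegrableOn (fun σ => U (b - a - σ) (B (u σ))) (Ioo 0 (b - a)) :=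
    hU.integrableOn_comp ⟨hu, _, hub⟩ _
  calc duhamel U B T τ ((Ioo a b).indicator fun s => u (s - a))
      = ∫ s in Ioo a b, U (T - b) (U (b - a - (s - a)) (B (u (s - a)))) := by
        rw [duhamel_indicator measurableSet_Ioo (Ioo_subset_Ioo hτ hbT)]
        congr with s
        rw [← hU.apply_add, show T - b + (b - a - (s - a)) = T - s by ring]
    _ = ∫ σ in Ioo 0 (b - a), U (T - b) (U (b - a - σ) (B (u σ))) := by
        rw [setIntegral_Ioo_comp_sub_right (fun σ => U (T - b) (U (b - a - σ) (B (u σ)))) hab.le,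
          sub_self]
    _ = U (T - b) (duhamel U B (b - a) 0 u) := (U (T - b)).integral_comp_comm hint
    _ = ξ := by rw [hsteer, ← neg_sub T b, hU.apply_apply_neg]

end Duhamel

section OptimalNorm

variable {E : Type*} [NormedAddCommGroup E] [InnerProductSpace ℂ E]
  {U : ℝ → E →L[ℂ] E} {B : E →L[ℂ] E} {y₀ z_d : E} {T τ r : ℝ} {u : ℝ → E}

theorem MNP_le_supNorm (hu : u ∈ WadmSet U B y₀ z_d T τ r) :
    MNP U B y₀ z_d T τ r ≤ supNorm u τ T :=
  csInf_le ⟨0, by rintro _ ⟨v, -, rfl⟩; exact supNorm_nonneg v τ T⟩ ⟨u, hu, rfl⟩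

theorem MNP_nonneg : 0 ≤ MNP U B y₀ z_d T τ r :=
  Real.sInf_nonneg (by rintro _ ⟨v, -, rfl⟩; exact supNorm_nonneg v τ T)

theorem MNP_le_of_ae_norm_le {M : ℝ} (hu : MemLinfty u 0 T)
    (hur : ‖stateT U B T τ u y₀ - z_d‖ ≤ r) (hM : 0 ≤ M) (hb : ∀ᵐ t, t ∈ Ioo τ T → ‖u t‖ ≤ M) :
    MNP U B y₀ z_d T τ r ≤ M :=
  (MNP_le_supNorm ⟨hu, hur⟩).trans (supNorm_le hM hb)

theorem sub_le_mul_supNorm (hU : IsUnitaryGroup U) (hτ : 0 ≤ τ) (hτT : τ ≤ T)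
    (hu : u ∈ WadmSet U B y₀ z_d T τ r) :
    ‖U T y₀ - z_d‖ - r ≤ ‖B‖ * (T - τ) * supNorm u τ T := by
  have hJ : ‖duhamel U B T τ u‖ ≤ ‖B‖ * supNorm u τ T * (T - τ) :=
    hU.norm_setIntegral_le T hτT (hu.1.ae_norm_le_supNorm hτ)
  have hsplit : U T y₀ - z_d = (stateT U B T τ u y₀ - z_d) - duhamel U B T τ u := by
    rw [stateT_eq_add_duhamel]
    abel
  have := norm_sub_le (stateT U B T τ u y₀ - z_d) (duhamel U B T τ u)
  rw [← hsplit] at this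
  linarith [hu.2]

theorem norm_duhamel_le (hu : u ∈ WadmSet U B y₀ z_d T τ r) :
    ‖duhamel U B T τ u‖ ≤ r + ‖U T y₀ - z_d‖ := by
  have hsplit : duhamel U B T τ u = (stateT U B T τ u y₀ - z_d) - (U T y₀ - z_d) := by
    rw [stateT_eq_add_duhamel]
    abel
  rw [hsplit]
  exact (norm_sub_le _ _).trans (add_le_add_left hu.2 _)

theorem tauTP_nonneg {M : ℝ} : 0 ≤ tauTP U B y₀ z_d T M r :=
  Real.sSup_nonneg (by rintro _ ⟨u, -, rfl⟩; exact Real.sSup_nonneg fun τ hτ => hτ.1.1)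

theorem le_tauOf (hτ : τ ∈ Ico 0 T) (hur : ‖stateT U B T τ u y₀ - z_d‖ ≤ r) :
    τ ≤ tauOf U B y₀ z_d T r u :=
  le_csSup ⟨T, fun _ hτ' => hτ'.1.2.le⟩ ⟨hτ, hur⟩

theorem tauOf_le_of_mem_VadmSet {τs : ℝ}
    (hmono : StrictMonoOn (fun τ => MNP U B y₀ z_d T τ r) (Ico 0 T)) (hτs : τs ∈ Ico 0 T)
    (hu : u ∈ VadmSet U B y₀ z_d T (MNP U B y₀ z_d T τs r) r) :
    tauOf U B y₀ z_d T r u ≤ τs := by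
  obtain ⟨τ₀, hτ₀, huM, hur⟩ := hu
  have key : ∀ τ ∈ Ico 0 T, τ₀ ≤ τ → ‖stateT U B T τ u y₀ - z_d‖ ≤ r → τ ≤ τs := by
    intro τ hτ hτ₀τ hτr
    refine (hmono.le_iff_le hτ hτs).1 (MNP_le_of_ae_norm_le huM.1 hτr MNP_nonneg ?_)
    filter_upwards [huM.2] with t ht hmem using ht (Ioo_subset_Ioo_left hτ₀τ hmem)
  refine Real.sSup_le (fun τ ⟨hτ, hτr⟩ => ?_) hτs.1
  rcases le_total τ τ₀ with h | h
  · exact h.trans (key τ₀ hτ₀ le_rfl hur)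
  · exact key τ hτ h hτr

variable [CompleteSpace E] [SecondCountableTopology E]

theorem WadmSet_nonempty (hU : IsUnitaryGroup U) (hEC : EC U B) (hr : 0 ≤ r) (hτT : τ < T) :
    (WadmSet U B y₀ z_d T τ r).Nonempty := by
  obtain ⟨C, -, hctrl⟩ := hEC.exists_control_Ioo hU T hτT le_rfl
  obtain ⟨w, hw, hwb, -, hwξ⟩ := hctrl (z_d - U T y₀)
  refine ⟨w, memLinfty_of_ae_norm_le hw hwb, ?_⟩
  rwa [stateT_eq_add_duhamel, hwξ τ le_rfl, add_sub_cancel, sub_self, norm_zero]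

theorem exists_mem_WadmSet_supNorm_lt (hU : IsUnitaryGroup U) (hEC : EC U B) (hr : 0 ≤ r)
    (hτT : τ < T) {c : ℝ} (hc : MNP U B y₀ z_d T τ r < c) :
    ∃ u ∈ WadmSet U B y₀ z_d T τ r, supNorm u τ T < c := by
  obtain ⟨_, ⟨u, hu, rfl⟩, hlt⟩ :=
    exists_lt_of_csInf_lt ((WadmSet_nonempty hU hEC hr hτT).image _) hc
  exact ⟨u, hu, hlt⟩

theorem sub_le_mul_MNP (hU : IsUnitaryGroup U) (hEC : EC U B) (hr : 0 ≤ r) (hτ : 0 ≤ τ)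
    (hτT : τ < T) : ‖U T y₀ - z_d‖ - r ≤ ‖B‖ * (T - τ) * MNP U B y₀ z_d T τ r :=
  Real.le_mul_sInf_image (WadmSet_nonempty hU hEC hr hτT)
    (mul_nonneg (norm_nonneg B) (sub_nonneg.2 hτT.le)) fun _ hu =>
    sub_le_mul_supNorm hU hτ hτT.le hu

theorem MNP_pos (hU : IsUnitaryGroup U) (hEC : EC U B) (hr : r < ‖U T y₀ - z_d‖)
    (hr₀ : 0 ≤ r) (hτ : 0 ≤ τ) (hτT : τ < T) : 0 < MNP U B y₀ z_d T τ r :=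
  pos_of_mul_pos_right ((sub_pos.2 hr).trans_le (sub_le_mul_MNP hU hEC hr₀ hτ hτT))
    (mul_nonneg (norm_nonneg B) (sub_nonneg.2 hτT.le))

theorem exists_control_reallocate (hU : IsUnitaryGroup U) (hEC : EC U B) {τ₁ τ₂ : ℝ}
    (h₁ : 0 ≤ τ₁) (h₁₂ : τ₁ < τ₂) (h₂ : τ₂ ≤ T) :
    ∃ C, 0 ≤ C ∧ ∀ u, MemLinfty u 0 T → ∀ θ : ℝ, 0 ≤ θ → θ ≤ 1 → ∃ v, MemLinfty v 0 T ∧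
      stateT U B T τ₁ v y₀ = stateT U B T τ₂ u y₀ ∧
      ∀ᵐ t, t ∈ Ioo τ₁ T →
        ‖v t‖ ≤ max ((1 - θ) * supNorm u τ₂ T) (C * θ * ‖duhamel U B T τ₂ u‖) := by
  obtain ⟨C, hC, hctrl⟩ := hEC.exists_control_Ioo hU T h₁₂ h₂
  refine ⟨C, hC, fun u hu θ hθ₀ hθ₁ => ?_⟩
  obtain ⟨w, hw, hwb, hw0, hwξ⟩ := hctrl (θ • duhamel U B T τ₂ u)
  have hu' : MemLinfty ((1 - θ) • (Ioo τ₂ T).indicator u) 0 T :=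
    (hu.indicator measurableSet_Ioo).const_smul _
  have hw' : MemLinfty w 0 T := memLinfty_of_ae_norm_le hw hwb
  refine ⟨_, hu'.add hw', ?_, ?_⟩
  · rw [stateT_eq_add_duhamel, stateT_eq_add_duhamel,
      duhamel_add hU (hu'.mono h₁ le_rfl) (hw'.mono h₁ le_rfl), duhamel_smul,
      duhamel_indicator_Ioo h₁₂.le, hwξ τ₁ le_rfl, ← add_smul, sub_add_cancel, one_smul]
  · filter_upwards [hu.ae_norm_le_supNorm (h₁.trans h₁₂.le), hwb] with t hut hwt hmem
    by_cases ht : t ∈ Ioo τ₂ T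
    · rw [Pi.add_apply, Pi.smul_apply, indicator_of_mem ht,
        hw0 t fun h => lt_asymm h.2 ht.1, add_zero, norm_smul,
        Real.norm_of_nonneg (sub_nonneg.2 hθ₁)]
      exact le_max_of_le_left (mul_le_mul_of_nonneg_left (hut ht) (sub_nonneg.2 hθ₁))
    · rw [Pi.add_apply, Pi.smul_apply, indicator_of_notMem ht, smul_zero, zero_add]
      refine le_max_of_le_right (hwt.trans_eq ?_)
      rw [norm_smul, Real.norm_of_nonneg hθ₀, mul_assoc]

theorem MNP_lt_MNP (hU : IsUnitaryGroup U) (hEC : EC U B) (hr : r ∈ Ioo 0 ‖U T y₀ - z_d‖)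
    {τ₁ τ₂ : ℝ} (h₁ : 0 ≤ τ₁) (h₁₂ : τ₁ < τ₂) (h₂ : τ₂ < T) :
    MNP U B y₀ z_d T τ₁ r < MNP U B y₀ z_d T τ₂ r := by
  set M₂ := MNP U B y₀ z_d T τ₂ r
  have hM₂ : 0 < M₂ := MNP_pos hU hEC hr.2 hr.1.le (h₁.trans h₁₂.le) h₂
  obtain ⟨C, hC, hre⟩ := exists_control_reallocate (y₀ := y₀) hU hEC h₁ h₁₂ h₂.le
  set K := r + ‖U T y₀ - z_d‖
  have hCK : 0 ≤ C * K := mul_nonneg hC (add_nonneg hr.1.le (norm_nonneg _))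
  set θ := M₂ / (2 * (M₂ + C * K))
  have hθ₀ : 0 < θ := by positivity
  have hθ₁ : θ < 1 := (div_lt_one (by positivity)).2 (by linarith)
  have hCθK : C * θ * K < M₂ := by
    rw [show C * θ * K = M₂ * (C * K / (2 * (M₂ + C * K))) by ring]
    exact mul_lt_of_lt_one_right hM₂ ((div_lt_one (by positivity)).2 (by linarith))
  obtain ⟨u, hu, hlt⟩ := exists_mem_WadmSet_supNorm_lt hU hEC hr.1.le h₂
    ((lt_div_iff₀ (sub_pos.2 hθ₁)).2 (mul_lt_of_lt_one_right hM₂ (by linarith)))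
  obtain ⟨v, hv, hstate, hvb⟩ := hre u hu.1 θ hθ₀.le hθ₁.le
  calc MNP U B y₀ z_d T τ₁ r
      ≤ max ((1 - θ) * supNorm u τ₂ T) (C * θ * ‖duhamel U B T τ₂ u‖) :=
        MNP_le_of_ae_norm_le hv (hstate ▸ hu.2)
          (le_max_of_le_left (mul_nonneg (sub_nonneg.2 hθ₁.le) (supNorm_nonneg u τ₂ T))) hvb
    _ < M₂ := max_lt ((lt_div_iff₀' (sub_pos.2 hθ₁)).1 hlt)
        ((mul_le_mul_of_nonneg_left (norm_duhamel_le hu) (by positivity)).trans_lt hCθK)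

theorem strictMonoOn_MNP (hU : IsUnitaryGroup U) (hEC : EC U B)
    (hr : r ∈ Ioo 0 ‖U T y₀ - z_d‖) :
    StrictMonoOn (fun τ => MNP U B y₀ z_d T τ r) (Ico 0 T) :=
  fun _ h₁ _ h₂ h₁₂ => MNP_lt_MNP hU hEC hr h₁.1 h₁₂ h₂.2

theorem exists_control_transfer (hU : IsUnitaryGroup U) (hEC : EC U B) {δ : ℝ} (hδ : 0 < δ) :
    ∃ C, 0 ≤ C ∧ ∀ τ₁ τ₂, 0 ≤ τ₁ → τ₁ ≤ τ₂ → τ₂ ≤ T - δ → ∀ u, MemLinfty u 0 T →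
      ∃ v, MemLinfty v 0 T ∧ stateT U B T τ₂ v y₀ = stateT U B T τ₁ u y₀ ∧
      ∀ᵐ t, t ∈ Ioo τ₂ T → ‖v t‖ ≤ (1 + C * (τ₂ - τ₁)) * supNorm u τ₁ T := by
  obtain ⟨C, hC, hctrl⟩ := hEC.exists_control_Ioo hU T (sub_lt_self T hδ) le_rfl
  refine ⟨C * ‖B‖, by positivity, fun τ₁ τ₂ h₁ h₁₂ h₂ u hu => ?_⟩
  have h₂T : τ₂ ≤ T := h₂.trans (sub_le_self T hδ.le)
  have hub := hu.ae_norm_le_supNorm h₁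
  set ξ := ∫ s in Ioo τ₁ τ₂, U (T - s) (B (u s))
  have hξ : ‖ξ‖ ≤ ‖B‖ * supNorm u τ₁ T * (τ₂ - τ₁) := hU.norm_setIntegral_le T h₁₂ (by
    filter_upwards [hub] with t ht hmem using ht (Ioo_subset_Ioo_right h₂T hmem))
  obtain ⟨w, hw, hwb, -, hwξ⟩ := hctrl ξ
  have hw' : MemLinfty w 0 T := memLinfty_of_ae_norm_le hw hwb
  refine ⟨u + w, hu.add hw', ?_, ?_⟩
  · rw [stateT_eq_add_duhamel, stateT_eq_add_duhamel,
      duhamel_add hU (hu.mono (h₁.trans h₁₂) le_rfl) (hw'.mono (h₁.trans h₁₂) le_rfl), hwξ τ₂ h₂,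
      duhamel_eq_setIntegral_add_duhamel hU h₁₂ h₂T (hu.mono h₁ le_rfl), add_comm ξ]
  · filter_upwards [hub, hwb] with t hut hwt hmem
    calc ‖u t + w t‖ ≤ ‖u t‖ + ‖w t‖ := norm_add_le _ _
      _ ≤ supNorm u τ₁ T + C * (‖B‖ * supNorm u τ₁ T * (τ₂ - τ₁)) :=
        add_le_add (hut (Ioo_subset_Ioo_left h₁₂ hmem))
          (hwt.trans (mul_le_mul_of_nonneg_left hξ hC))
      _ = (1 + C * ‖B‖ * (τ₂ - τ₁)) * supNorm u τ₁ T := by ring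

theorem MNP_le_mul_MNP (hU : IsUnitaryGroup U) (hEC : EC U B) (hr : 0 ≤ r) {δ : ℝ}
    (hδ : 0 < δ) :
    ∃ C, 0 ≤ C ∧ ∀ τ₁ τ₂, 0 ≤ τ₁ → τ₁ ≤ τ₂ → τ₂ ≤ T - δ →
      MNP U B y₀ z_d T τ₂ r ≤ (1 + C * (τ₂ - τ₁)) * MNP U B y₀ z_d T τ₁ r := by
  obtain ⟨C, hC, htr⟩ := exists_control_transfer (y₀ := y₀) hU hEC hδ
  refine ⟨C, hC, fun τ₁ τ₂ h₁ h₁₂ h₂ => ?_⟩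
  have hk : 0 ≤ 1 + C * (τ₂ - τ₁) := add_nonneg zero_le_one (mul_nonneg hC (sub_nonneg.2 h₁₂))
  refine Real.le_mul_sInf_image (WadmSet_nonempty hU hEC hr (by linarith)) hk fun u hu => ?_
  obtain ⟨v, hv, hstate, hvb⟩ := htr τ₁ τ₂ h₁ h₁₂ h₂ u hu.1
  exact MNP_le_of_ae_norm_le hv (hstate ▸ hu.2) (mul_nonneg hk (supNorm_nonneg u τ₁ T)) hvb

theorem lipschitzOnWith_MNP (hU : IsUnitaryGroup U) (hEC : EC U B)
    (hr : r ∈ Ioo 0 ‖U T y₀ - z_d‖) {δ : ℝ} (hδ : 0 < δ) (hδT : δ ≤ T) :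
    ∃ K, LipschitzOnWith K (fun τ => MNP U B y₀ z_d T τ r) (Icc 0 (T - δ)) := by
  obtain ⟨C, hC, hle⟩ := MNP_le_mul_MNP (y₀ := y₀) (z_d := z_d) hU hEC hr.1.le hδ
  have hmono : MonotoneOn (fun τ => MNP U B y₀ z_d T τ r) (Icc 0 (T - δ)) :=
    (strictMonoOn_MNP hU hEC hr).monotoneOn.mono fun τ hτ => ⟨hτ.1, by linarith [hτ.2]⟩
  refine ⟨_, hmono.lipschitzOnWith_of_sub_le (K := C * MNP U B y₀ z_d T (T - δ) r)
    fun x hx y hy hxy => ?_⟩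
  have h₁ := hle x y hx.1 hxy hy.2
  have h₂ := hmono hx ⟨sub_nonneg.2 hδT, le_rfl⟩ hx.2
  have h₃ : 0 ≤ C * (y - x) := mul_nonneg hC (sub_nonneg.2 hxy)
  nlinarith

theorem continuousOn_MNP (hU : IsUnitaryGroup U) (hEC : EC U B)
    (hr : r ∈ Ioo 0 ‖U T y₀ - z_d‖) :
    ContinuousOn (fun τ => MNP U B y₀ z_d T τ r) (Ico 0 T) := by
  intro τ hτ
  have hδ : 0 < (T - τ) / 2 := by linarith [hτ.2]
  obtain ⟨K, hK⟩ := lipschitzOnWith_MNP hU hEC hr hδ (by linarith [hτ.1])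
  have hτδ : τ < T - (T - τ) / 2 := by linarith [hτ.2]
  refine (hK.continuousOn τ ⟨hτ.1, hτδ.le⟩).mono_of_mem_nhdsWithin ?_
  exact mem_nhdsWithin.2 ⟨Iio _, isOpen_Iio, hτδ, fun x hx => ⟨hx.2.1, le_of_lt hx.1⟩⟩

theorem tendsto_MNP_atTop (hU : IsUnitaryGroup U) (hEC : EC U B) (hT : 0 < T)
    (hr : r ∈ Ioo 0 ‖U T y₀ - z_d‖) :
    Tendsto (fun τ => MNP U B y₀ z_d T τ r) (𝓝[<] T) atTop := by
  have hgap : 0 < ‖U T y₀ - z_d‖ - r := sub_pos.2 hr.2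
  have hB : 0 < ‖B‖ := by
    refine (norm_nonneg B).lt_of_ne' fun hB => ?_
    have := sub_le_mul_MNP (y₀ := y₀) (z_d := z_d) hU hEC hr.1.le le_rfl hT
    rw [hB, zero_mul, zero_mul] at this
    linarith
  have hlow : ∀ᶠ τ in 𝓝[<] T,
      (‖U T y₀ - z_d‖ - r) / ‖B‖ * (T - τ)⁻¹ ≤ MNP U B y₀ z_d T τ r := by
    filter_upwards [Ioo_mem_nhdsLT hT] with τ hτ
    rw [← div_eq_mul_inv, div_div, div_le_iff₀ (mul_pos hB (sub_pos.2 hτ.2)), mul_comm]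
    exact sub_le_mul_MNP hU hEC hr.1.le hτ.1.le hτ.2
  have hgap_to_zero : Tendsto (fun τ => T - τ) (𝓝[<] T) (𝓝[>] 0) :=
    tendsto_nhdsWithin_iff.2 ⟨((continuous_sub_left T).tendsto' T 0 (sub_self T)).mono_left
      nhdsWithin_le_nhds,
      eventually_nhdsWithin_of_forall fun τ hτ => show 0 < T - τ from sub_pos.2 hτ⟩
  exact tendsto_atTop_mono' _ hlow
    ((tendsto_inv_nhdsGT_zero.comp hgap_to_zero).const_mul_atTop (div_pos hgap hB))

theorem tauTP_MNP (hU : IsUnitaryGroup U) (hEC : EC U B) (hr : r ∈ Ioo 0 ‖U T y₀ - z_d‖)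
    {τs : ℝ} (hτs : τs ∈ Ico 0 T) :
    tauTP U B y₀ z_d T (MNP U B y₀ z_d T τs r) r = τs := by
  have hmono := strictMonoOn_MNP hU hEC hr
  have hle : ∀ x ∈ tauOf U B y₀ z_d T r '' VadmSet U B y₀ z_d T (MNP U B y₀ z_d T τs r) r,
      x ≤ τs := by
    rintro _ ⟨u, hu, rfl⟩
    exact tauOf_le_of_mem_VadmSet hmono hτs hu
  refine le_antisymm (Real.sSup_le hle hτs.1) (le_of_forall_lt_imp_le_of_dense fun τ hτ => ?_)
  rcases lt_or_ge τ 0 with hτ₀ | hτ₀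
  · exact hτ₀.le.trans tauTP_nonneg
  have hτT : τ ∈ Ico 0 T := ⟨hτ₀, hτ.trans hτs.2⟩
  obtain ⟨u, hu, hlt⟩ := exists_mem_WadmSet_supNorm_lt hU hEC hr.1.le hτT.2 (hmono hτT hτs hτ)
  have hV : u ∈ VadmSet U B y₀ z_d T (MNP U B y₀ z_d T τs r) r := ⟨τ, hτT, ⟨hu.1, by
    filter_upwards [hu.1.ae_norm_le_supNorm hτ₀] with t ht hmem using (ht hmem).trans hlt.le⟩, hu.2⟩
  exact (le_tauOf hτT hu.2).trans (le_csSup ⟨τs, hle⟩ ⟨u, hV, rfl⟩)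

end OptimalNorm

theorem mnp_map_properties_general
    (U : ℝ → H →L[ℂ] H) (B : H →L[ℂ] H) (hU : IsUnitaryGroup U) (hEC : EC U B)
    (T : ℝ) (hT : 0 < T) (y₀ z_d : H) (r : ℝ) (hr : r ∈ Ioo (0 : ℝ) ‖U T y₀ - z_d‖) :
    StrictMonoOn (fun τ => MNP U B y₀ z_d T τ r) (Ico (0 : ℝ) T) ∧
    ContinuousOn (fun τ => MNP U B y₀ z_d T τ r) (Ico (0 : ℝ) T) ∧
    (∀ τ ∈ Ico (0 : ℝ) T, MNP U B y₀ z_d T 0 r ≤ MNP U B y₀ z_d T τ r) ∧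
    Tendsto (fun τ => MNP U B y₀ z_d T τ r) (𝓝[<] T) atTop ∧
    (∀ M : ℝ, MNP U B y₀ z_d T 0 r ≤ M → MNP U B y₀ z_d T (tauTP U B y₀ z_d T M r) r = M) ∧
    (∀ τ ∈ Ico (0 : ℝ) T, tauTP U B y₀ z_d T (MNP U B y₀ z_d T τ r) r = τ) ∧
    InvOn (fun M => tauTP U B y₀ z_d T M r) (fun τ => MNP U B y₀ z_d T τ r)
      (Ico (0 : ℝ) T) (Ici (MNP U B y₀ z_d T 0 r)) := by
  have hmono := strictMonoOn_MNP hU hEC hr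
  have hcont := continuousOn_MNP hU hEC hr
  have hlim := tendsto_MNP_atTop hU hEC hT hr
  have hleft : ∀ τ ∈ Ico (0 : ℝ) T, tauTP U B y₀ z_d T (MNP U B y₀ z_d T τ r) r = τ :=
    fun τ hτ => tauTP_MNP hU hEC hr hτ
  have hright : ∀ M : ℝ, MNP U B y₀ z_d T 0 r ≤ M →
      MNP U B y₀ z_d T (tauTP U B y₀ z_d T M r) r = M := by
    intro M hM
    obtain ⟨τ, hτ, rfl⟩ := hcont.surjOn_Ici_of_tendsto_atTop hT hlim hM
    rw [hleft τ hτ]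
  exact ⟨hmono, hcont, fun τ hτ => hmono.monotoneOn ⟨le_rfl, hT⟩ hτ hτ.1, hlim, hright, hleft,
    hleft, hright⟩

theorem mnp_map_properties
    (U : ℝ → H →L[ℂ] H) (B : H →L[ℂ] H) (hU : IsUnitaryGroup U) (hB : IsOrthProj B)
    (hEC : EC U B) (hECrev : EC (fun t => U (-t)) B)
    (hUC : UC U B)
    (T : ℝ) (hT : 0 < T) (y₀ z_d : H) (hrT : 0 < ‖U T y₀ - z_d‖)
    (r : ℝ) (hr : r ∈ Ioo (0 : ℝ) ‖U T y₀ - z_d‖) :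
    StrictMonoOn (fun τ => MNP U B y₀ z_d T τ r) (Ico (0 : ℝ) T) ∧
    ContinuousOn (fun τ => MNP U B y₀ z_d T τ r) (Ico (0 : ℝ) T) ∧
    (∀ τ ∈ Ico (0 : ℝ) T, MNP U B y₀ z_d T 0 r ≤ MNP U B y₀ z_d T τ r) ∧
    Tendsto (fun τ => MNP U B y₀ z_d T τ r) (𝓝[<] T) atTop ∧
    (∀ M : ℝ, MNP U B y₀ z_d T 0 r ≤ M → MNP U B y₀ z_d T (tauTP U B y₀ z_d T M r) r = M) ∧
    (∀ τ ∈ Ico (0 : ℝ) T, tauTP U B y₀ z_d T (MNP U B y₀ z_d T τ r) r = τ) ∧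
    InvOn (fun M => tauTP U B y₀ z_d T M r) (fun τ => MNP U B y₀ z_d T τ r)
      (Ico (0 : ℝ) T) (Ici (MNP U B y₀ z_d T 0 r)) :=
  mnp_map_properties_general U B hU hEC T hT y₀ z_d r hr
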